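/- Let X1, Y1 be nonzero constants (or smooth functions of x and y respectively), t \ne -1. Suppose f, b11, b12, b22 satisfy the GMC equations in Tchebycheff coordinates (sin f \ne 0) and the constraint K sin^2 f - Y1 b11 + (X1 e^{if} + Y1 e^{-if}) b12 - X1 b22 = 0. Then A = (i/2)[[f_x, (e^{if} b11 - b12)/sin f],[ (e^{-if} b11 - b12)/((t+1) sin f) - 2 i X1 t/(t+1), -f_x]] and B = (i/2)[[0, (e^{if} b12 - b22)/sin f],[ (e^{-if} b12 - b22)/((t+1) sin f) - (2 i Y1 t/(t+1)) e^{-if}, 0]] satisfy A_y - B_x + [A,B] = 0. -/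

import Mathlib

open Matrix

noncomputable section

abbrev M2 := Matrix (Fin 2) (Fin 2) ℂ

/-- Partial derivative in `x` of a matrix-valued function, taken entrywise. -/
def pdx (A : ℝ → ℝ → M2) (x y : ℝ) : M2 :=
  Matrix.of fun i j => deriv (fun s => A s y i j) x

/-- Partial derivative in `y` of a matrix-valued function, taken entrywise. -/
def pdy (A : ℝ → ℝ → M2) (x y : ℝ) : M2 :=
  Matrix.of fun i j => deriv (fun s => A x s i j) y

/-- Smoothness of a matrix-valued function of `(x,y)`, entrywise. -/
def SmoothM (A : ℝ → ℝ → M2) : Prop :=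
  ∀ i j, ContDiff ℝ (⊤ : ℕ∞) (fun p : ℝ × ℝ => A p.1 p.2 i j)

/-- The curvature `A_y - B_x + [A,B]` of the pair `(A,B)`. -/
def curv (A B : ℝ → ℝ → M2) (x y : ℝ) : M2 :=
  pdy A x y - pdx B x y + (A x y * B x y - B x y * A x y)

/-- Partial derivative in `x` of a scalar function. -/
def px (u : ℝ → ℝ → ℝ) (x y : ℝ) : ℝ := deriv (fun s => u s y) x

/-- Partial derivative in `y` of a scalar function. -/
def py (u : ℝ → ℝ → ℝ) (x y : ℝ) : ℝ := deriv (fun s => u x s) y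

/-- Smoothness of a scalar function of `(x,y)`. -/
def Smooth2 (u : ℝ → ℝ → ℝ) : Prop := ContDiff ℝ (⊤ : ℕ∞) (fun p : ℝ × ℝ => u p.1 p.2)

/-- The Gauss–Mainardi–Codazzi equations in Tchebycheff coordinates. -/
def GMCT (f b11 b12 b22 : ℝ → ℝ → ℝ) : Prop :=
  ∀ x y : ℝ,
    py (px f) x y = (b12 x y ^ 2 - b11 x y * b22 x y) / Real.sin (f x y) ∧
    py b11 x y = px b12 x y +
      ((b22 x y - b12 x y * Real.cos (f x y)) / Real.sin (f x y)) * px f x y ∧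
    py b12 x y = px b22 x y -
      ((b11 x y - b12 x y * Real.cos (f x y)) / Real.sin (f x y)) * py f x y

lemma hasDerivAt_py (u : ℝ → ℝ → ℝ) (hu : Smooth2 u) (x y : ℝ) :
    HasDerivAt (fun s => u x s) (py u x y) y := by
  have hdiff : DifferentiableAt ℝ (fun s => u x s) y :=
    ((hu.differentiable (by simp)).comp
      ((differentiable_const x).prodMk differentiable_id)).differentiableAt
  exact hdiff.hasDerivAt

lemma hasDerivAt_px (u : ℝ → ℝ → ℝ) (hu : Smooth2 u) (x y : ℝ) :
    HasDerivAt (fun s => u s y) (px u x y) x := by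
  have hdiff : DifferentiableAt ℝ (fun s => u s y) x :=
    ((hu.differentiable (by simp)).comp
      (differentiable_id.prodMk (differentiable_const y))).differentiableAt
  exact hdiff.hasDerivAt

lemma smooth2_px (u : ℝ → ℝ → ℝ) (hu : Smooth2 u) : Smooth2 (px u) := by
  have key : ∀ p : ℝ × ℝ, px u p.1 p.2
      = fderiv ℝ (fun q : ℝ × ℝ => u q.1 q.2) p (1, 0) := by
    intro p
    have h1 : HasDerivAt (fun s : ℝ => ((s, p.2) : ℝ × ℝ)) ((1 : ℝ), (0 : ℝ)) p.1 :=
      (hasDerivAt_id p.1).prodMk (hasDerivAt_const p.1 p.2)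
    have h2 := ((hu.differentiable (by simp)) (p.1, p.2)).hasFDerivAt.comp_hasDerivAt p.1 h1
    exact h2.deriv
  have heq : (fun p : ℝ × ℝ => px u p.1 p.2)
      = fun p => fderiv ℝ (fun q : ℝ × ℝ => u q.1 q.2) p (1, 0) := funext fun p => key p
  rw [Smooth2, heq]
  exact (hu.fderiv_right (by simp)).clm_apply contDiff_const

set_option maxHeartbeats 4000000 in
/-- Case 4, Tchebycheff: ZCR for the class
`K sin²f - Y1 b11 + (X1 e^{if} + Y1 e^{-if}) b12 - X1 b22 = 0` with nonzero
constants `X1, Y1`. -/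
theorem zcr_tcheb_case4 (X1 Y1 : ℝ) (hX1 : X1 ≠ 0) (hY1 : Y1 ≠ 0)
    (t : ℝ) (ht : t ≠ -1)
    (f b11 b12 b22 : ℝ → ℝ → ℝ)
    (hf : Smooth2 f) (h11 : Smooth2 b11) (h12 : Smooth2 b12) (h22 : Smooth2 b22)
    (hs : ∀ x y, Real.sin (f x y) ≠ 0)
    (hgmc : GMCT f b11 b12 b22)
    (hcon : ∀ x y, (((b11 x y * b22 x y - b12 x y ^ 2) / Real.sin (f x y) ^ 2 : ℝ) : ℂ)
        * ((Real.sin (f x y) : ℝ) : ℂ) ^ 2 - (Y1 : ℂ) * (b11 x y : ℝ)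
        + ((X1 : ℂ) * Complex.exp (Complex.I * (f x y : ℝ))
            + (Y1 : ℂ) * Complex.exp (-(Complex.I * (f x y : ℝ)))) * (b12 x y : ℝ)
        - (X1 : ℂ) * (b22 x y : ℝ) = 0) :
    ∀ x y, curv
      (fun x y => (Complex.I / 2) •
        !![((px f x y : ℝ) : ℂ),
            (Complex.exp (Complex.I * (f x y : ℝ)) * (b11 x y : ℝ) - (b12 x y : ℝ))
              / ((Real.sin (f x y) : ℝ) : ℂ);
           (Complex.exp (-(Complex.I * (f x y : ℝ))) * (b11 x y : ℝ) - (b12 x y : ℝ))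
              / (((t : ℂ) + 1) * ((Real.sin (f x y) : ℝ) : ℂ))
              - 2 * Complex.I * (X1 : ℂ) * (t : ℂ) / ((t : ℂ) + 1),
            -((px f x y : ℝ) : ℂ)])
      (fun x y => (Complex.I / 2) •
        !![0,
            (Complex.exp (Complex.I * (f x y : ℝ)) * (b12 x y : ℝ) - (b22 x y : ℝ))
              / ((Real.sin (f x y) : ℝ) : ℂ);
           (Complex.exp (-(Complex.I * (f x y : ℝ))) * (b12 x y : ℝ) - (b22 x y : ℝ))
              / (((t : ℂ) + 1) * ((Real.sin (f x y) : ℝ) : ℂ))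
              - (2 * Complex.I * (Y1 : ℂ) * (t : ℂ) / ((t : ℂ) + 1))
                * Complex.exp (-(Complex.I * (f x y : ℝ))),
            0]) x y = 0 := by
  intro x y
  have hsne : ((Real.sin (f x y) : ℝ) : ℂ) ≠ 0 := Complex.ofReal_ne_zero.mpr (hs x y)
  have ht1 : ((t : ℂ) + 1) ≠ 0 := by
    intro h
    apply ht
    have h2 : ((t : ℝ) : ℂ) = ((-1 : ℝ) : ℂ) := by push_cast; linear_combination h
    exact_mod_cast h2
  obtain ⟨w, hwdef⟩ : ∃ w : ℂ, w = (t : ℂ) + 1 := ⟨_, rfl⟩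
  rw [← hwdef] at ht1 ⊢
  have hE : Complex.exp (Complex.I * ((f x y : ℝ) : ℂ))
      = ((Real.cos (f x y) : ℝ) : ℂ) + ((Real.sin (f x y) : ℝ) : ℂ) * Complex.I := by
    rw [mul_comm, Complex.exp_mul_I, ← Complex.ofReal_cos, ← Complex.ofReal_sin]
  have hEm : Complex.exp (-(Complex.I * ((f x y : ℝ) : ℂ)))
      = ((Real.cos (f x y) : ℝ) : ℂ) - ((Real.sin (f x y) : ℝ) : ℂ) * Complex.I := by
    have harg : -(Complex.I * ((f x y : ℝ) : ℂ)) = ((-(f x y) : ℝ) : ℂ) * Complex.I := by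
      push_cast; ring
    rw [harg, Complex.exp_mul_I, ← Complex.ofReal_cos, ← Complex.ofReal_sin,
      Real.cos_neg, Real.sin_neg]
    push_cast; ring
  -- GMC equations, in ℂ
  have hG : ((py (px f) x y : ℝ) : ℂ)
      = (((b12 x y : ℝ) : ℂ) ^ 2 - ((b11 x y : ℝ) : ℂ) * ((b22 x y : ℝ) : ℂ))
        / ((Real.sin (f x y) : ℝ) : ℂ) := by
    rw [(hgmc x y).1]; push_cast; ring
  have hC1 : ((py b11 x y : ℝ) : ℂ)
      = ((px b12 x y : ℝ) : ℂ)
        + ((((b22 x y : ℝ) : ℂ) - ((b12 x y : ℝ) : ℂ) * ((Real.cos (f x y) : ℝ) : ℂ))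
            / ((Real.sin (f x y) : ℝ) : ℂ)) * ((px f x y : ℝ) : ℂ) := by
    rw [(hgmc x y).2.1]; push_cast; ring
  have hC2 : ((py b12 x y : ℝ) : ℂ)
      = ((px b22 x y : ℝ) : ℂ)
        - ((((b11 x y : ℝ) : ℂ) - ((b12 x y : ℝ) : ℂ) * ((Real.cos (f x y) : ℝ) : ℂ))
            / ((Real.sin (f x y) : ℝ) : ℂ)) * ((py f x y : ℝ) : ℂ) := by
    rw [(hgmc x y).2.2]; push_cast; ring
  have hQ := hcon x y
  rw [hE, hEm] at hQ
  have hsne2 : Complex.sin ((f x y : ℝ) : ℂ) ≠ 0 := by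
    rw [← Complex.ofReal_sin]; exact hsne
  have hP : ((Real.cos (f x y) : ℝ) : ℂ) ^ 2 + ((Real.sin (f x y) : ℝ) : ℂ) ^ 2 = 1 := by
    exact_mod_cast Real.cos_sq_add_sin_sq (f x y)
  -- derivative facts
  have hfyR := hasDerivAt_py f hf x y
  have hfy := hfyR.ofReal_comp
  have hfxY := (hasDerivAt_py (px f) (smooth2_px f hf) x y).ofReal_comp
  have hb11y := (hasDerivAt_py b11 h11 x y).ofReal_comp
  have hb12y := (hasDerivAt_py b12 h12 x y).ofReal_comp
  have hsy := hfyR.sin.ofReal_comp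
  have hEy := (hfy.const_mul Complex.I).cexp
  have hEmy := ((hfy.const_mul Complex.I).neg).cexp
  have hfxR := hasDerivAt_px f hf x y
  have hfx := hfxR.ofReal_comp
  have hb12x := (hasDerivAt_px b12 h12 x y).ofReal_comp
  have hb22x := (hasDerivAt_px b22 h22 x y).ofReal_comp
  have hsx := hfxR.sin.ofReal_comp
  have hEx := (hfx.const_mul Complex.I).cexp
  have hEmx := ((hfx.const_mul Complex.I).neg).cexp
  -- entry derivatives
  have dA00 : deriv (fun s => Complex.I / 2 * ((px f x s : ℝ) : ℂ)) y
      = Complex.I / 2 * ((py (px f) x y : ℝ) : ℂ) :=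
    (hfxY.const_mul (Complex.I / 2)).deriv
  have dA11 : deriv (fun s => Complex.I / 2 * -((px f x s : ℝ) : ℂ)) y
      = Complex.I / 2 * -((py (px f) x y : ℝ) : ℂ) :=
    (hfxY.neg.const_mul (Complex.I / 2)).deriv
  have dA01 : deriv (fun s => Complex.I / 2 *
      ((Complex.exp (Complex.I * ((f x s : ℝ) : ℂ)) * ((b11 x s : ℝ) : ℂ) - ((b12 x s : ℝ) : ℂ))
        / ((Real.sin (f x s) : ℝ) : ℂ))) y
      = Complex.I / 2 *
        (((Complex.exp (Complex.I * ((f x y : ℝ) : ℂ)) * (Complex.I * ((py f x y : ℝ) : ℂ))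
              * ((b11 x y : ℝ) : ℂ)
            + Complex.exp (Complex.I * ((f x y : ℝ) : ℂ)) * ((py b11 x y : ℝ) : ℂ)
            - ((py b12 x y : ℝ) : ℂ)) * ((Real.sin (f x y) : ℝ) : ℂ)
          - (Complex.exp (Complex.I * ((f x y : ℝ) : ℂ)) * ((b11 x y : ℝ) : ℂ)
              - ((b12 x y : ℝ) : ℂ)) * ((Real.cos (f x y) * py f x y : ℝ) : ℂ))
          / ((Real.sin (f x y) : ℝ) : ℂ) ^ 2) :=
    ((((hEy.mul hb11y).sub hb12y).div hsy hsne).const_mul (Complex.I / 2)).deriv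
  have dA10 : deriv (fun s => Complex.I / 2 *
      ((Complex.exp (-(Complex.I * ((f x s : ℝ) : ℂ))) * ((b11 x s : ℝ) : ℂ)
          - ((b12 x s : ℝ) : ℂ))
        / (w * ((Real.sin (f x s) : ℝ) : ℂ))
        - 2 * Complex.I * (X1 : ℂ) * (t : ℂ) / w)) y
      = Complex.I / 2 *
        (((Complex.exp (-(Complex.I * ((f x y : ℝ) : ℂ))) * -(Complex.I * ((py f x y : ℝ) : ℂ))
              * ((b11 x y : ℝ) : ℂ)
            + Complex.exp (-(Complex.I * ((f x y : ℝ) : ℂ))) * ((py b11 x y : ℝ) : ℂ)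
            - ((py b12 x y : ℝ) : ℂ)) * ((Real.sin (f x y) : ℝ) : ℂ)
          - (Complex.exp (-(Complex.I * ((f x y : ℝ) : ℂ))) * ((b11 x y : ℝ) : ℂ)
              - ((b12 x y : ℝ) : ℂ))
            * (((Real.cos (f x y) : ℝ) : ℂ) * ((py f x y : ℝ) : ℂ)))
          / (w * ((Real.sin (f x y) : ℝ) : ℂ) ^ 2)) := by
    refine (HasDerivAt.deriv (((((hEmy.mul hb11y).sub hb12y).div (hsy.const_mul w)
        (mul_ne_zero ht1 hsne)).sub_const
        (2 * Complex.I * (X1 : ℂ) * (t : ℂ) / w)).const_mul (Complex.I / 2))).trans ?_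
    simp only [Pi.mul_apply, Pi.sub_apply, Pi.neg_apply, Pi.div_apply]
    push_cast
    field_simp [hsne2, ht1]
  have dB01 : deriv (fun s => Complex.I / 2 *
      ((Complex.exp (Complex.I * ((f s y : ℝ) : ℂ)) * ((b12 s y : ℝ) : ℂ) - ((b22 s y : ℝ) : ℂ))
        / ((Real.sin (f s y) : ℝ) : ℂ))) x
      = Complex.I / 2 *
        (((Complex.exp (Complex.I * ((f x y : ℝ) : ℂ)) * (Complex.I * ((px f x y : ℝ) : ℂ))
              * ((b12 x y : ℝ) : ℂ)
            + Complex.exp (Complex.I * ((f x y : ℝ) : ℂ)) * ((px b12 x y : ℝ) : ℂ)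
            - ((px b22 x y : ℝ) : ℂ)) * ((Real.sin (f x y) : ℝ) : ℂ)
          - (Complex.exp (Complex.I * ((f x y : ℝ) : ℂ)) * ((b12 x y : ℝ) : ℂ)
              - ((b22 x y : ℝ) : ℂ)) * ((Real.cos (f x y) * px f x y : ℝ) : ℂ))
          / ((Real.sin (f x y) : ℝ) : ℂ) ^ 2) :=
    ((((hEx.mul hb12x).sub hb22x).div hsx hsne).const_mul (Complex.I / 2)).deriv
  have dB10 : deriv (fun s => Complex.I / 2 *
      ((Complex.exp (-(Complex.I * ((f s y : ℝ) : ℂ))) * ((b12 s y : ℝ) : ℂ)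
          - ((b22 s y : ℝ) : ℂ))
        / (w * ((Real.sin (f s y) : ℝ) : ℂ))
        - 2 * Complex.I * (Y1 : ℂ) * (t : ℂ) / w
            * Complex.exp (-(Complex.I * ((f s y : ℝ) : ℂ))))) x
      = Complex.I / 2 *
        (((Complex.exp (-(Complex.I * ((f x y : ℝ) : ℂ))) * -(Complex.I * ((px f x y : ℝ) : ℂ))
              * ((b12 x y : ℝ) : ℂ)
            + Complex.exp (-(Complex.I * ((f x y : ℝ) : ℂ))) * ((px b12 x y : ℝ) : ℂ)
            - ((px b22 x y : ℝ) : ℂ)) * ((Real.sin (f x y) : ℝ) : ℂ)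
          - (Complex.exp (-(Complex.I * ((f x y : ℝ) : ℂ))) * ((b12 x y : ℝ) : ℂ)
              - ((b22 x y : ℝ) : ℂ))
            * (((Real.cos (f x y) : ℝ) : ℂ) * ((px f x y : ℝ) : ℂ)))
          / (w * ((Real.sin (f x y) : ℝ) : ℂ) ^ 2)
        - 2 * Complex.I * (Y1 : ℂ) * (t : ℂ) / w
            * (Complex.exp (-(Complex.I * ((f x y : ℝ) : ℂ)))
                * -(Complex.I * ((px f x y : ℝ) : ℂ)))) := by
    refine (HasDerivAt.deriv (((((hEmx.mul hb12x).sub hb22x).div (hsx.const_mul w)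
        (mul_ne_zero ht1 hsne)).sub
        (hEmx.const_mul (2 * Complex.I * (Y1 : ℂ) * (t : ℂ) / w))).const_mul (Complex.I / 2))).trans ?_
    simp only [Pi.mul_apply, Pi.sub_apply, Pi.neg_apply, Pi.div_apply]
    push_cast
    field_simp [hsne2, ht1]
  show curv _ _ x y = 0
  rw [curv]
  ext i j
  fin_cases i <;> fin_cases j <;>
    simp only [Fin.mk_zero, Fin.mk_one, Fin.isValue, pdx, pdy, Matrix.of_apply, Matrix.sub_apply, Matrix.add_apply,
      Matrix.mul_apply, Fin.sum_univ_two, Matrix.smul_apply, smul_eq_mul,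
      Matrix.cons_val', Matrix.cons_val_zero, Matrix.cons_val_one, Matrix.head_cons,
      Matrix.head_fin_const, Matrix.empty_val', Matrix.cons_val_fin_one,
      Matrix.zero_apply, mul_zero, deriv_const', deriv_const]
  · rw [dA00, hE, hEm]
    linear_combination (norm := (push_cast; ring_nf; field_simp [hsne2, ht1]; ring_nf; try field_simp [hsne2, ht1]; try ring_nf; try field_simp [hsne2, ht1]; try ring_nf; try field_simp [hsne2, ht1]; try ring_nf; try field_simp [hsne2, ht1]; try ring))
      (Complex.I / 2) * hG
      + (Complex.I ^ 3 * (t : ℂ) / (2 * w * ((Real.sin (f x y) : ℝ) : ℂ))) * hQ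
      - (Complex.I ^ 3 * (t : ℂ) * (Y1 : ℂ) * ((b11 x y : ℝ) : ℂ)
          / (2 * w * ((Real.sin (f x y) : ℝ) : ℂ))) * hP
      + ((Complex.I / 2) * ((((b12 x y : ℝ) : ℂ) ^ 2 - ((b11 x y : ℝ) : ℂ) * ((b22 x y : ℝ) : ℂ))
            / ((Real.sin (f x y) : ℝ) : ℂ))
          + Complex.I ^ 3 * (t : ℂ) * (Y1 : ℂ) * ((b11 x y : ℝ) : ℂ)
              * ((Real.sin (f x y) : ℝ) : ℂ) / (2 * w)) * Complex.I_sq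
      - (Complex.I ^ 3 / 2 * ((((b12 x y : ℝ) : ℂ) ^ 2 - ((b11 x y : ℝ) : ℂ) * ((b22 x y : ℝ) : ℂ))
          / (w * ((Real.sin (f x y) : ℝ) : ℂ)))) * hwdef
  · rw [dA01, dB01, hE]
    linear_combination (norm := (push_cast; ring_nf; field_simp [hsne2, ht1]; ring_nf; try field_simp [hsne2, ht1]; try ring_nf; try field_simp [hsne2, ht1]; try ring_nf; try field_simp [hsne2, ht1]; try ring_nf; try field_simp [hsne2, ht1]; try ring))
      (Complex.I * (((Real.cos (f x y) : ℝ) : ℂ) + ((Real.sin (f x y) : ℝ) : ℂ) * Complex.I)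
          / (2 * ((Real.sin (f x y) : ℝ) : ℂ))) * hC1
      - (Complex.I / (2 * ((Real.sin (f x y) : ℝ) : ℂ))) * hC2
      - (Complex.I * ((b11 x y : ℝ) : ℂ) * ((py f x y : ℝ) : ℂ)
          / (2 * ((Real.sin (f x y) : ℝ) : ℂ) ^ 2)) * hP
      + (Complex.I * ((b11 x y : ℝ) : ℂ) * ((py f x y : ℝ) : ℂ) / 2) * Complex.I_sq
  · rw [dA10, dB10, hEm]
    linear_combination (norm := (push_cast; ring_nf; field_simp [hsne2, ht1]; ring_nf; try field_simp [hsne2, ht1]; try ring_nf; try field_simp [hsne2, ht1]; try ring_nf; try field_simp [hsne2, ht1]; try ring_nf; try field_simp [hsne2, ht1]; try ring))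
      (Complex.I * (((Real.cos (f x y) : ℝ) : ℂ) - ((Real.sin (f x y) : ℝ) : ℂ) * Complex.I)
          / (2 * w * ((Real.sin (f x y) : ℝ) : ℂ))) * hC1
      - (Complex.I / (2 * w * ((Real.sin (f x y) : ℝ) : ℂ))) * hC2
      - (Complex.I * ((b11 x y : ℝ) : ℂ) * ((py f x y : ℝ) : ℂ)
          / (2 * w * ((Real.sin (f x y) : ℝ) : ℂ) ^ 2)) * hP
      + (Complex.I * ((b11 x y : ℝ) : ℂ) * ((py f x y : ℝ) : ℂ) / (2 * w))
          * Complex.I_sq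
  · rw [dA11, hE, hEm]
    linear_combination (norm := (push_cast; ring_nf; field_simp [hsne2, ht1]; ring_nf; try field_simp [hsne2, ht1]; try ring_nf; try field_simp [hsne2, ht1]; try ring_nf; try field_simp [hsne2, ht1]; try ring_nf; try field_simp [hsne2, ht1]; try ring))
      (-(Complex.I / 2)) * hG
      - (Complex.I ^ 3 * (t : ℂ) / (2 * w * ((Real.sin (f x y) : ℝ) : ℂ))) * hQ
      + (Complex.I ^ 3 * (t : ℂ) * (Y1 : ℂ) * ((b11 x y : ℝ) : ℂ)
          / (2 * w * ((Real.sin (f x y) : ℝ) : ℂ))) * hP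
      - ((Complex.I / 2) * ((((b12 x y : ℝ) : ℂ) ^ 2 - ((b11 x y : ℝ) : ℂ) * ((b22 x y : ℝ) : ℂ))
            / ((Real.sin (f x y) : ℝ) : ℂ))
          + Complex.I ^ 3 * (t : ℂ) * (Y1 : ℂ) * ((b11 x y : ℝ) : ℂ)
              * ((Real.sin (f x y) : ℝ) : ℂ) / (2 * w)) * Complex.I_sq
      + (Complex.I ^ 3 / 2 * ((((b12 x y : ℝ) : ℂ) ^ 2 - ((b11 x y : ℝ) : ℂ) * ((b22 x y : ℝ) : ℂ))
          / (w * ((Real.sin (f x y) : ℝ) : ℂ)))) * hwdef
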